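/- arXiv:2203.04274 — 6 statements merged into one kernel-verified Lean document; each statement's English description precedes it below -/
import Mathlib

section
/- Let d ≥ 1 and let θ ∈ ℝ^d be nonzero, with a⋆ := θ/‖θ‖. For any action a ∈ ℝ^d with ‖a‖ = 1 and ⟨a, θ⟩ ≥ −‖θ‖/2, the instantaneous regret of a satisfies (1/2)·‖P_a^⊥ θ‖²/‖θ‖ ≤ ⟨a⋆ − a, θ⟩ ≤ 3·‖P_a^⊥ θ‖²/‖θ‖. -/
/-!
For a unit vector `a`, Pythagoras gives `‖P_a^⊥ θ‖² = ‖θ‖² - ⟨a, θ⟩² = r · (‖θ‖ + ⟨a, θ⟩)`, where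
`r = ‖θ‖ - ⟨a, θ⟩` is the regret. By Cauchy–Schwarz and the correlation assumption the factor
`(‖θ‖ + ⟨a, θ⟩) / ‖θ‖` lies in `[1/2, 2]`, so `‖P_a^⊥ θ‖² / ‖θ‖` is within a factor two of `r`.
-/

open EuclideanSpace

/-- Projection of `u` onto the span of `v`. -/
noncomputable def projOn {d : ℕ} (v u : EuclideanSpace ℝ (Fin d)) : EuclideanSpace ℝ (Fin d) :=
  ((inner ℝ u v : ℝ) / ‖v‖ ^ 2) • v

/-- Projection of `u` onto the orthogonal complement of `v`. -/
noncomputable def projPerp {d : ℕ} (v u : EuclideanSpace ℝ (Fin d)) : EuclideanSpace ℝ (Fin d) :=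
  u - projOn v u

open RealInnerProductSpace

theorem norm_projPerp_sq {d : ℕ} (v u : EuclideanSpace ℝ (Fin d)) :
    ‖projPerp v u‖ ^ 2 = ‖u‖ ^ 2 - ⟪u, v⟫ ^ 2 / ‖v‖ ^ 2 := by
  rcases eq_or_ne v 0 with rfl | hv
  · simp [projPerp, projOn]
  have hv' : ‖v‖ ≠ 0 := norm_ne_zero_iff.mpr hv
  rw [projPerp, projOn, norm_sub_sq_real, real_inner_smul_right, norm_smul, mul_pow,
    Real.norm_eq_abs, sq_abs]
  field_simp [hv']
  ring

theorem inner_inv_norm_smul_sub {E : Type*} [NormedAddCommGroup E] [InnerProductSpace ℝ E]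
    (θ a : E) : ⟪‖θ‖⁻¹ • θ - a, θ⟫ = ‖θ‖ - ⟪a, θ⟫ := by
  rcases eq_or_ne θ 0 with rfl | hθ
  · simp
  rw [inner_sub_left, real_inner_smul_left, real_inner_self_eq_norm_sq]
  field_simp [norm_ne_zero_iff.mpr hθ]

theorem sq_sub_sq_div_le_two_mul_sub {n t : ℝ} (hn : 0 ≤ n) (ht : t ≤ n) :
    (n ^ 2 - t ^ 2) / n ≤ 2 * (n - t) := by
  rcases hn.eq_or_lt with rfl | hn
  · rw [div_zero]; linarith
  rw [div_le_iff₀ hn]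
  nlinarith [sq_nonneg (n - t)]

theorem sub_le_two_mul_sq_sub_sq_div {n t : ℝ} (ht : t ≤ n) (hnt : -n / 2 ≤ t) :
    n - t ≤ 2 * ((n ^ 2 - t ^ 2) / n) := by
  rcases (show 0 ≤ n by linarith).eq_or_lt with rfl | hn
  · rw [div_zero]; linarith
  rw [mul_div_assoc', le_div_iff₀ hn]
  nlinarith [mul_nonneg (sub_nonneg.mpr ht) (show 0 ≤ n + 2 * t by linarith)]

theorem regret_unit_ball_general {d : ℕ} (θ a : EuclideanSpace ℝ (Fin d))
    (ha : ‖a‖ = 1) (hcorr : (inner ℝ a θ : ℝ) ≥ -‖θ‖ / 2) :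
    (1 / 2) * ‖projPerp a θ‖ ^ 2 / ‖θ‖ ≤ (inner ℝ (‖θ‖⁻¹ • θ - a) θ : ℝ) ∧
      (inner ℝ (‖θ‖⁻¹ • θ - a) θ : ℝ) ≤ 3 * ‖projPerp a θ‖ ^ 2 / ‖θ‖ := by
  have hcs : ⟪a, θ⟫ ≤ ‖θ‖ := by simpa [ha] using real_inner_le_norm a θ
  rw [norm_projPerp_sq, ha, one_pow, div_one, real_inner_comm, inner_inv_norm_smul_sub,
    mul_div_assoc, mul_div_assoc]
  constructor
  · linarith [sq_sub_sq_div_le_two_mul_sub (norm_nonneg θ) hcs]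
  · linarith [sub_le_two_mul_sq_sub_sq_div hcs hcorr]

/-- For a unit-norm action `a` with `⟨a, θ⟩ ≥ -‖θ‖/2`, the instantaneous regret
`⟨a⋆ - a, θ⟩` (with `a⋆ = θ/‖θ‖`) is between `(1/2)·‖P_a^⊥ θ‖²/‖θ‖` and `3·‖P_a^⊥ θ‖²/‖θ‖`. -/
theorem regret_unit_ball {d : ℕ} (hd : 1 ≤ d) (θ a : EuclideanSpace ℝ (Fin d))
    (hθ : θ ≠ 0) (ha : ‖a‖ = 1) (hcorr : (inner ℝ a θ : ℝ) ≥ -‖θ‖ / 2) :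
    (1 / 2) * ‖projPerp a θ‖ ^ 2 / ‖θ‖ ≤ (inner ℝ (‖θ‖⁻¹ • θ - a) θ : ℝ) ∧
      (inner ℝ (‖θ‖⁻¹ • θ - a) θ : ℝ) ≤ 3 * ‖projPerp a θ‖ ^ 2 / ‖θ‖ :=
  regret_unit_ball_general θ a ha hcorr
end

section
/- Let θ ∈ ℝ^d, let h ∈ ℝ^d be a hint with ‖h‖ = 1, and let p ∈ ℝ^d be an orthogonal perturbation of h, i.e. ⟨p, h⟩ = 0, with ‖p‖ < 1/8. Then the regret of the perturbed action a := Perturb(h, p) = (h + p)/√(1 + ‖p‖²) with respect to the hint h is bounded as ⟨h − a, θ⟩ ≤ ‖θ‖·‖p‖² + |⟨p, P_h^⊥ θ⟩|. -/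
/-- The perturbed action `(h + p)/√(1 + ‖p‖²)`. -/
noncomputable def perturb {d : ℕ} (h p : EuclideanSpace ℝ (Fin d)) : EuclideanSpace ℝ (Fin d) :=
  (Real.sqrt (1 + ‖p‖ ^ 2))⁻¹ • (h + p)

/-!
Writing `s = √(1 + ‖p‖²)`, the regret splits as
`⟨h - perturb h p, θ⟩ = (1 - s⁻¹) ⟨h, θ⟩ - s⁻¹ ⟨p, θ⟩`.
The first term is at most `‖p‖² ‖θ‖` because `1 - s⁻¹ ≤ s - 1 ≤ ‖p‖²`, and the second at most
`|⟨p, θ⟩|`, which equals `|⟨p, P_h^⊥ θ⟩|` as `p ⊥ h`.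
-/

lemma one_sub_inv_sqrt_one_add_le {t : ℝ} (ht : 0 ≤ t) : 1 - (√(1 + t))⁻¹ ≤ t := by
  have hs : 1 ≤ √(1 + t) := Real.one_le_sqrt.mpr (by linarith)
  have hsq : √(1 + t) ^ 2 = 1 + t := Real.sq_sqrt (by linarith)
  have hinv : (√(1 + t))⁻¹ * √(1 + t) = 1 := inv_mul_cancel₀ (by positivity)
  have hinv_le : (√(1 + t))⁻¹ ≤ 1 := inv_le_one_of_one_le₀ hs
  nlinarith [mul_nonneg (sub_nonneg.mpr hinv_le) (sub_nonneg.mpr hs)]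

lemma inner_projPerp_of_inner_eq_zero {d : ℕ} {h p : EuclideanSpace ℝ (Fin d)}
    (hph : inner ℝ p h = 0) (θ : EuclideanSpace ℝ (Fin d)) :
    inner ℝ p (projPerp h θ) = inner ℝ p θ := by
  rw [projPerp, projOn, inner_sub_right, real_inner_smul_right, hph, mul_zero, sub_zero]

lemma inner_sub_perturb {d : ℕ} (h p θ : EuclideanSpace ℝ (Fin d)) :
    inner ℝ (h - perturb h p) θ
      = (1 - (√(1 + ‖p‖ ^ 2))⁻¹) * inner ℝ h θ - (√(1 + ‖p‖ ^ 2))⁻¹ * inner ℝ p θ := by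
  simp only [perturb, inner_sub_left, inner_add_left, real_inner_smul_left]
  ring

theorem hint_regret_perturb_general {d : ℕ} (θ h p : EuclideanSpace ℝ (Fin d))
    (hh : ‖h‖ = 1) (hph : (inner ℝ p h : ℝ) = 0) :
    (inner ℝ (h - perturb h p) θ : ℝ) ≤ ‖θ‖ * ‖p‖ ^ 2 + |(inner ℝ p (projPerp h θ) : ℝ)| := by
  rw [inner_sub_perturb, inner_projPerp_of_inner_eq_zero hph]
  set c := (√(1 + ‖p‖ ^ 2))⁻¹
  have hc_one : c ≤ 1 := inv_le_one_of_one_le₀ (Real.one_le_sqrt.mpr (by nlinarith))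
  have hc_pos : 0 < c := by positivity
  have hhθ : inner ℝ h θ ≤ ‖θ‖ := by simpa [hh] using real_inner_le_norm h θ
  have hfirst : (1 - c) * inner ℝ h θ ≤ ‖p‖ ^ 2 * ‖θ‖ :=
    (mul_le_mul_of_nonneg_left hhθ (sub_nonneg.mpr hc_one)).trans
      (mul_le_mul_of_nonneg_right (one_sub_inv_sqrt_one_add_le (sq_nonneg _)) (norm_nonneg θ))
  have hsecond : c * -inner ℝ p θ ≤ |inner ℝ p θ| :=
    (mul_le_mul_of_nonneg_left (neg_le_abs _) hc_pos.le).trans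
      (mul_le_of_le_one_left (abs_nonneg _) hc_one)
  linarith

/-- hint-based regret of the perturbed action is at most
`‖θ‖·‖p‖² + |⟨p, P_h^⊥ θ⟩|`. -/
theorem hint_regret_perturb {d : ℕ} (hd : 1 ≤ d) (θ h p : EuclideanSpace ℝ (Fin d))
    (hh : ‖h‖ = 1) (hph : (inner ℝ p h : ℝ) = 0) (hpn : ‖p‖ < 1 / 8) :
    (inner ℝ (h - perturb h p) θ : ℝ) ≤ ‖θ‖ * ‖p‖ ^ 2 + |(inner ℝ p (projPerp h θ) : ℝ)| :=
  hint_regret_perturb_general θ h p hh hph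
end

section
/- Let h ∈ ℝ^d with ‖h‖ = 1, let 0 < Δ ≤ 1/4, and let θ ∈ ℝ^d satisfy ‖θ − h/2‖ ≤ Δ. Then θ ≠ 0 and the instantaneous regret of the hint h with respect to the optimal action a⋆ := θ/‖θ‖ satisfies ⟨θ, a⋆ − h⟩ ≤ 972·Δ². -/
/-!
Writing `s = ‖θ‖` and `t = ⟪θ, h⟫`, the regret of `h` is `s - t`, and for a unit vector `h`
expanding the square gives the identity `s - t = ‖θ - h/2‖² - (s - 1/2)²`. Hence the regret is at
most `‖θ - h/2‖² ≤ Δ²`, while `‖θ‖ ≥ 1/2 - Δ > 0` by the triangle inequality.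
-/

open RealInnerProductSpace

variable {E : Type*} [NormedAddCommGroup E] [InnerProductSpace ℝ E]

theorem real_inner_inv_norm_smul_self_sub (θ h : E) :
    ⟪θ, ‖θ‖⁻¹ • θ - h⟫ = ‖θ‖ - ⟪θ, h⟫ := by
  rw [inner_sub_right, real_inner_smul_right, real_inner_self_eq_norm_sq]
  rcases eq_or_ne ‖θ‖ 0 with hθ | hθ
  · simp [hθ]
  · field_simp

theorem two_mul_norm_sub_inner_eq {h : E} (hh : ‖h‖ = 1) (θ : E) (c : ℝ) :
    2 * c * (‖θ‖ - ⟪θ, h⟫) = ‖θ - c • h‖ ^ 2 - (‖θ‖ - c) ^ 2 := by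
  rw [norm_sub_sq_real, real_inner_smul_right, norm_smul, hh, Real.norm_eq_abs, mul_one, sq_abs]
  ring

theorem norm_sub_inner_le_norm_sub_half_smul_sq {h : E} (hh : ‖h‖ = 1) (θ : E) :
    ‖θ‖ - ⟪θ, h⟫ ≤ ‖θ - (1 / 2 : ℝ) • h‖ ^ 2 := by
  have key := two_mul_norm_sub_inner_eq hh θ (1 / 2)
  nlinarith [sq_nonneg (‖θ‖ - 1 / 2)]

theorem norm_pos_of_norm_sub_half_smul_le {h : E} (hh : ‖h‖ = 1) {θ : E} {Δ : ℝ}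
    (hΔ : Δ < 1 / 2) (hclose : ‖θ - (1 / 2 : ℝ) • h‖ ≤ Δ) : 0 < ‖θ‖ := by
  have hhalf : ‖(1 / 2 : ℝ) • h‖ = 1 / 2 := by simp [norm_smul, hh]
  have := norm_sub_norm_le ((1 / 2 : ℝ) • h) θ
  rw [norm_sub_rev, hhalf] at this
  linarith

theorem hint_regret_small_general {d : ℕ}
    (θ h : EuclideanSpace ℝ (Fin d)) (hh : ‖h‖ = 1)
    (Δ : ℝ) (hΔ4 : Δ ≤ 1 / 4)
    (hclose : ‖θ - (1 / 2 : ℝ) • h‖ ≤ Δ) :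
    θ ≠ 0 ∧ (inner ℝ θ (‖θ‖⁻¹ • θ - h) : ℝ) ≤ 972 * Δ ^ 2 := by
  refine ⟨norm_pos_iff.mp (norm_pos_of_norm_sub_half_smul_le hh (by linarith) hclose), ?_⟩
  calc ⟪θ, ‖θ‖⁻¹ • θ - h⟫ = ‖θ‖ - ⟪θ, h⟫ := real_inner_inv_norm_smul_self_sub θ h
    _ ≤ ‖θ - (1 / 2 : ℝ) • h‖ ^ 2 := norm_sub_inner_le_norm_sub_half_smul_sq hh θ
    _ ≤ Δ ^ 2 := pow_le_pow_left₀ (norm_nonneg _) hclose 2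
    _ ≤ 972 * Δ ^ 2 := by nlinarith [sq_nonneg Δ]

/-- If `‖h‖ = 1`, `0 < Δ ≤ 1/4` and `‖θ - h/2‖ ≤ Δ`, then `θ ≠ 0` and the
instantaneous regret of the hint satisfies `⟨θ, a⋆ - h⟩ ≤ 972·Δ²` where `a⋆ = θ/‖θ‖`. -/
theorem hint_regret_small {d : ℕ} (hd : 1 ≤ d)
    (θ h : EuclideanSpace ℝ (Fin d)) (hh : ‖h‖ = 1)
    (Δ : ℝ) (hΔ0 : 0 < Δ) (hΔ4 : Δ ≤ 1 / 4)
    (hclose : ‖θ - (1 / 2 : ℝ) • h‖ ≤ Δ) :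
    θ ≠ 0 ∧ (inner ℝ θ (‖θ‖⁻¹ • θ - h) : ℝ) ≤ 972 * Δ ^ 2 :=
  hint_regret_small_general θ h hh Δ hΔ4 hclose
end

section
/- Let d ≥ 1 and let G = (G_1, …, G_d) be a random vector with independent coordinates, each Gaussian with mean 0 and variance 1/d. For every δ ∈ (0, 1), the probability that ‖G‖² = Σ_{i=1}^d G_i² exceeds 1 + 2√(ln(1/δ)/d) + 2·ln(1/δ)/d is at most δ. -/
/-!
Chernoff's bound. For `G ~ N(0, v)` and `2tv < 1` one has `E exp (t G²) = (1 - 2tv)^(-1/2)`, so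
for `n` independent copies `P(∑ Gᵢ² ≥ a) ≤ exp (-ta) (1 - 2tv)^(-n/2)`. For the threshold
`a = nv (1 + 2w + 2w²)` take `t` with `1 - 2tv = (1 + 2w)⁻¹`; the exponent is then at most `-nw²`
because `log x ≤ sinh (log x) = (x - x⁻¹) / 2` for `x ≥ 1`. Finally put `n = d`, `v = d⁻¹` and
`w² = log (1/δ) / d`.
-/

open MeasureTheory ProbabilityTheory Real Finset
open scoped NNReal

/-- The law of a random vector in ℝ^d with independent Gaussian coordinates of mean 0 and
variance 1/d (an isotropic Gaussian N(0, I_d/d)). -/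
noncomputable def isoGaussian (d : ℕ) : Measure (Fin d → ℝ) :=
  Measure.pi fun _ : Fin d => gaussianReal 0 (d : NNReal)⁻¹

theorem Real.log_le_sub_inv_div_two {x : ℝ} (hx : 1 ≤ x) : log x ≤ (x - x⁻¹) / 2 := by
  rw [← sinh_log (by linarith)]
  exact self_le_sinh_iff.mpr (log_nonneg hx)

theorem log_one_add_two_mul_div_two_le {w : ℝ} (hw : 0 ≤ w) :
    log (1 + 2 * w) / 2 ≤ w * (1 + 2 * w + 2 * w ^ 2) / (1 + 2 * w) - w ^ 2 := by
  have h := log_le_sub_inv_div_two (x := 1 + 2 * w) (by linarith)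
  have : ((1 + 2 * w) - (1 + 2 * w)⁻¹) / 2 =
      2 * (w * (1 + 2 * w + 2 * w ^ 2) / (1 + 2 * w) - w ^ 2) := by
    field_simp
    ring
  linarith

theorem gaussianPDFReal_zero_mul_exp_mul_sq (v : ℝ≥0) (t y : ℝ) :
    gaussianPDFReal 0 v y * exp (t * y ^ 2) =
      (√(2 * π * v))⁻¹ * exp (-((2 * v : ℝ)⁻¹ - t) * y ^ 2) := by
  rw [gaussianPDFReal, mul_assoc, ← exp_add]
  congr 2
  ring

section

variable {v : ℝ≥0} {t : ℝ}

theorem integrable_exp_mul_sq_gaussianReal (hv : v ≠ 0) (ht : 2 * t * v < 1) :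
    Integrable (fun y ↦ exp (t * y ^ 2)) (gaussianReal 0 v) := by
  have hv0 : 0 < (v : ℝ) := by positivity
  have hb : 0 < (2 * v : ℝ)⁻¹ - t := by
    rw [show (2 * v : ℝ)⁻¹ - t = (1 - 2 * t * v) / (2 * v) by field_simp]
    exact div_pos (by linarith) (by positivity)
  rw [gaussianReal_of_var_ne_zero 0 hv, integrable_withDensity_iff (measurable_gaussianPDF 0 v)
    (ae_of_all _ fun _ ↦ gaussianPDF_lt_top)]
  simp_rw [toReal_gaussianPDF, mul_comm _ (gaussianPDFReal 0 v _),
    gaussianPDFReal_zero_mul_exp_mul_sq]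
  exact (integrable_exp_neg_mul_sq hb).const_mul _

/-- For `1 ≤ 2tv` both sides are junk `0`: the integrand is not integrable and `√` of a
nonpositive number is `0`. -/
theorem mgf_sq_gaussianReal (hv : v ≠ 0) :
    mgf (fun y ↦ y ^ 2) (gaussianReal 0 v) t = (√(1 - 2 * t * v))⁻¹ := by
  have hv0 : 0 < (v : ℝ) := by positivity
  have hb : (2 * v : ℝ)⁻¹ - t = (1 - 2 * t * v) / (2 * v) := by field_simp
  simp_rw [mgf, integral_gaussianReal_eq_integral_smul hv, smul_eq_mul,
    gaussianPDFReal_zero_mul_exp_mul_sq, integral_const_mul, integral_gaussian, hb]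
  have h2πv : 0 < √(2 * π * v) := by positivity
  rw [show π / ((1 - 2 * t * v) / (2 * v)) = 2 * π * v / (1 - 2 * t * v) by field_simp,
    sqrt_div (by positivity)]
  field_simp

end

section

variable {ι E : Type*} [Fintype ι] [MeasurableSpace E]

theorem mgf_sum_comp_pi (μ : Measure E) [SigmaFinite μ] (f : E → ℝ) (t : ℝ) :
    mgf (fun x : ι → E ↦ ∑ i, f (x i)) (Measure.pi fun _ ↦ μ) t = mgf f μ t ^ Fintype.card ι := by
  simp only [mgf, mul_sum, exp_sum]
  exact integral_fintype_prod_eq_pow (fun y ↦ exp (t * f y))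

theorem integrable_exp_mul_sum_comp_pi {μ : Measure E} [SigmaFinite μ] {f : E → ℝ} {t : ℝ}
    (hf : Integrable (fun y ↦ exp (t * f y)) μ) :
    Integrable (fun x : ι → E ↦ exp (t * ∑ i, f (x i))) (Measure.pi fun _ ↦ μ) := by
  simp only [mul_sum, exp_sum]
  exact Integrable.fintype_prod fun _ ↦ hf

theorem measureReal_pi_gaussianReal_sum_sq_ge_le {v : ℝ≥0} (hv : v ≠ 0) {w : ℝ} (hw : 0 ≤ w) :
    (Measure.pi fun _ : ι ↦ gaussianReal 0 v).real
        {x | Fintype.card ι * v * (1 + 2 * w + 2 * w ^ 2) ≤ ∑ i, x i ^ 2} ≤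
      exp (-(Fintype.card ι * w ^ 2)) := by
  set n : ℝ := (Fintype.card ι : ℝ)
  have hv0 : 0 < (v : ℝ) := by positivity
  have h12w : 0 < 1 + 2 * w := by linarith
  set t := w / ((1 + 2 * w) * v) with ht_def
  have h_one_sub : 1 - 2 * t * v = (1 + 2 * w)⁻¹ := by rw [ht_def]; field_simp; ring
  have ht : 2 * t * v < 1 := by
    have : 0 < (1 + 2 * w)⁻¹ := by positivity
    linarith
  have chernoff := measure_ge_le_exp_mul_mgf (n * v * (1 + 2 * w + 2 * w ^ 2)) (by positivity)
    (integrable_exp_mul_sum_comp_pi (ι := ι) (integrable_exp_mul_sq_gaussianReal hv ht))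
  rw [mgf_sum_comp_pi _ (fun y ↦ y ^ 2), mgf_sq_gaussianReal hv, h_one_sub, sqrt_inv, inv_inv,
    ← exp_log (sqrt_pos.mpr h12w), log_sqrt h12w.le, ← exp_nat_mul, ← exp_add] at chernoff
  refine chernoff.trans (exp_le_exp.mpr ?_)
  have hta : t * (n * v * (1 + 2 * w + 2 * w ^ 2)) =
      n * (w * (1 + 2 * w + 2 * w ^ 2) / (1 + 2 * w)) := by
    rw [ht_def]; field_simp
  have hlog := mul_le_mul_of_nonneg_left (log_one_add_two_mul_div_two_le hw) (by positivity : 0 ≤ n)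
  rw [neg_mul, hta]
  linarith

end

/-- upper chi-square tail bound: the probability that `‖G‖²` exceeds
`1 + 2√(ln(1/δ)/d) + 2·ln(1/δ)/d` is at most `δ`. -/
theorem gaussian_norm_upper_tail (d : ℕ) (hd : 1 ≤ d) (δ : ℝ) (hδ0 : 0 < δ) (hδ1 : δ < 1) :
    isoGaussian d
      {x | 1 + 2 * Real.sqrt (Real.log (1 / δ) / d) + 2 * Real.log (1 / δ) / d
        < ∑ i, x i ^ 2} ≤ ENNReal.ofReal δ := by
  have hδ : exp (-log (1 / δ)) = δ := by rw [one_div, log_inv, neg_neg, exp_log hδ0]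
  set L := log (1 / δ)
  have hL : 0 ≤ L := log_nonneg (one_le_one_div hδ0 hδ1.le)
  have hd0 : (0 : ℝ) < d := by exact_mod_cast hd
  have tail := measureReal_pi_gaussianReal_sum_sq_ge_le (ι := Fin d)
    (v := (d : ℝ≥0)⁻¹) (by positivity) (sqrt_nonneg (L / d))
  have hthreshold : d * (d : ℝ)⁻¹ * (1 + 2 * √(L / d) + 2 * √(L / d) ^ 2) =
      1 + 2 * √(L / d) + 2 * L / d := by
    rw [sq_sqrt (by positivity)]
    field_simp
  rw [Fintype.card_fin, NNReal.coe_inv, NNReal.coe_natCast, hthreshold, sq_sqrt (by positivity),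
    mul_div_cancel₀ _ hd0.ne', hδ] at tail
  unfold isoGaussian
  rw [← ofReal_measureReal]
  refine ENNReal.ofReal_le_ofReal (le_trans ?_ tail)
  exact measureReal_mono (Set.ofPred_subset_ofPred.mpr fun _ ↦ le_of_lt)
end

section
/- Let d ≥ 1 and let G = (G_1, …, G_d) be a random vector with independent coordinates, each Gaussian with mean 0 and variance 1/d. For every δ ∈ (0, 1), the probability that ‖G‖² = Σ_{i=1}^d G_i² is at most 1 − 2√(ln(1/δ)/d) is at most δ. -/
/-!
Chernoff's bound at a negative parameter `s`: the lower tail `{∑ xᵢ² ≤ n v (1 - t)}` has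
probability at most `exp (-s n v (1 - t)) · E[exp (s ∑ xᵢ²)]`, and by independence the moment
generating function factorises into `n` copies of the chi-square one, `(1 - 2 v s)^(-1/2)`.
Taking `s = -t / (2v)` and using `log (1 + t) ≥ t - t²/2` leaves `exp (-n t² / 4)`; with
`v = 1/d`, `n = d` and `t = 2 √(log (1/δ) / d)` this is `δ`.
-/

open MeasureTheory ProbabilityTheory

open Real Finset
open scoped NNReal

lemma sub_sq_div_two_le_log_one_add {t : ℝ} (ht : 0 ≤ t) : t - t ^ 2 / 2 ≤ log (1 + t) := by
  refine le_trans ?_ (le_log_one_add_of_nonneg ht)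
  rw [le_div_iff₀ (by linarith)]
  nlinarith [pow_nonneg ht 3]

lemma inv_sqrt_one_add_le_exp {t : ℝ} (ht : 0 ≤ t) :
    (√(1 + t))⁻¹ ≤ exp (-(t / 2 - t ^ 2 / 4)) := by
  rw [← exp_log (by positivity : 0 < (√(1 + t))⁻¹), exp_le_exp, log_inv,
    log_sqrt (by linarith)]
  linarith [sub_sq_div_two_le_log_one_add ht]

namespace ProbabilityTheory

lemma mgf_sq_gaussianReal (v : ℝ≥0) (t : ℝ) :
    mgf (fun x => x ^ 2) (gaussianReal 0 v) t = (√(1 - 2 * v * t))⁻¹ := by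
  obtain rfl | hv := eq_or_ne v 0
  · simp [mgf]
  have hv' : (0 : ℝ) < v := by positivity
  have hdensity : ∀ x : ℝ, gaussianPDFReal 0 v x • exp (t * x ^ 2) =
      (√(2 * π * v))⁻¹ * exp (-((2 * (v : ℝ))⁻¹ - t) * x ^ 2) := by
    intro x
    rw [gaussianPDFReal, smul_eq_mul, mul_assoc, ← exp_add]
    congr 2
    field_simp
    ring
  -- For `2 v t ≥ 1` both sides are the junk value `0`: the integrand is not integrable
  -- and `√` of a nonpositive number is `0`.
  rw [mgf, integral_gaussianReal_eq_integral_smul hv]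
  simp_rw [hdensity]
  rw [integral_const_mul, integral_gaussian, ← sqrt_inv, ← sqrt_inv,
    ← sqrt_mul (by positivity)]
  congr 1
  field_simp

lemma mgf_sum_pi {ι E : Type*} [Fintype ι] [MeasurableSpace E] (μ : Measure E) [SigmaFinite μ]
    (f : E → ℝ) (t : ℝ) :
    mgf (fun x : ι → E => ∑ i, f (x i)) (Measure.pi fun _ => μ) t =
      mgf f μ t ^ Fintype.card ι := by
  simp only [mgf, mul_sum, exp_sum]
  exact integral_fintype_prod_eq_pow (ι := ι) (fun y => exp (t * f y))

lemma measureReal_sum_sq_le_pi_gaussianReal {ι : Type*} [Fintype ι] {v : ℝ≥0} (hv : v ≠ 0)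
    {t : ℝ} (ht : 0 ≤ t) :
    (Measure.pi fun _ : ι => gaussianReal 0 v).real
        {x | ∑ i, x i ^ 2 ≤ Fintype.card ι * v * (1 - t)} ≤
      exp (-(Fintype.card ι * t ^ 2 / 4)) := by
  set n : ℝ := (Fintype.card ι : ℝ)
  have hv' : (0 : ℝ) < v := by positivity
  set s : ℝ := -(t / (2 * v))
  have hs : s ≤ 0 := neg_nonpos.mpr (by positivity)
  have hint : Integrable (fun x : ι → ℝ => exp (s * ∑ i, x i ^ 2))
      (Measure.pi fun _ : ι => gaussianReal 0 v) := by
    simp_rw [← neg_mul_neg s]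
    exact integrable_exp_mul_of_le (-s) 0 (neg_nonneg.mpr hs)
      (Measurable.aemeasurable (by fun_prop))
      (ae_of_all _ fun x => neg_nonpos.mpr (sum_nonneg fun i _ => sq_nonneg (x i)))
  have hmgf_arg : 1 - 2 * v * s = 1 + t := by simp only [s]; field_simp; ring
  have hexp_arg : -s * (n * v * (1 - t)) = n * (t - t ^ 2) / 2 := by simp only [s]; field_simp
  calc _ ≤ exp (-s * (n * v * (1 - t))) *
        mgf (fun x : ι → ℝ => ∑ i, x i ^ 2) (Measure.pi fun _ => gaussianReal 0 v) s :=
        measure_le_le_exp_mul_mgf _ hs hint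
    _ = exp (n * (t - t ^ 2) / 2) * (√(1 + t))⁻¹ ^ Fintype.card ι := by
        rw [mgf_sum_pi _ (fun y : ℝ => y ^ 2), mgf_sq_gaussianReal, hmgf_arg, hexp_arg]
    _ ≤ exp (n * (t - t ^ 2) / 2) * exp (-(t / 2 - t ^ 2 / 4)) ^ Fintype.card ι := by
        gcongr
        exact inv_sqrt_one_add_le_exp ht
    _ = exp (-(n * t ^ 2 / 4)) := by
        rw [← exp_nat_mul, ← exp_add]
        congr 1
        simp only [n]
        ring

end ProbabilityTheory

/-- lower chi-square tail bound: the probability that `‖G‖²` is at most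
`1 - 2√(ln(1/δ)/d)` is at most `δ`. -/
theorem gaussian_norm_lower_tail (d : ℕ) (hd : 1 ≤ d) (δ : ℝ) (hδ0 : 0 < δ) (hδ1 : δ < 1) :
    isoGaussian d
      {x | ∑ i, x i ^ 2 ≤ 1 - 2 * Real.sqrt (Real.log (1 / δ) / d)} ≤ ENNReal.ofReal δ := by
  have hd' : (0 : ℝ) < d := by exact_mod_cast hd
  set L := log (1 / δ)
  have hL : 0 ≤ L := log_nonneg (by rw [le_div_iff₀ hδ0]; linarith)
  set t := 2 * √(L / d)
  have htail := measureReal_sum_sq_le_pi_gaussianReal (ι := Fin d)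
    (inv_ne_zero (by exact_mod_cast hd'.ne' : (d : ℝ≥0) ≠ 0)) (by positivity : 0 ≤ t)
  have hvar : (Fintype.card (Fin d) : ℝ) * ((d : ℝ≥0)⁻¹ : ℝ≥0) = 1 := by simp [hd'.ne']
  have hexp : exp (-(Fintype.card (Fin d) * t ^ 2 / 4)) = δ := by
    rw [Fintype.card_fin, mul_pow, sq_sqrt (by positivity)]
    field_simp
    rw [show 2 ^ 2 * L / 4 = L by ring, exp_neg, exp_log (by positivity), one_div,
      inv_inv]
  rw [hvar, one_mul, hexp] at htail
  rw [isoGaussian, ← ofReal_measureReal]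
  exact ENNReal.ofReal_le_ofReal htail
end

section
/- Let d ≥ 1, let G = (G_1, …, G_d) be a random vector with independent coordinates, each Gaussian with mean 0 and variance 1/d, and let v ∈ ℝ^d be a nonzero vector. For every δ ∈ (0, 1), the probability that ⟨v, G⟩² = (Σ_{i=1}^d v_i G_i)² is at most (‖v‖²/d)·(1 − 2√(ln(1/δ))) is at most δ. -/
/-!
The linear form `⟨v, G⟩` is a centred real Gaussian of variance `V = ‖v‖² / d` (compare
characteristic functions). Its density is bounded by `1 / √(2πV)`, so the event `⟨v, G⟩² ≤ V c`,
an interval of length `2 √(V c)`, has probability at most `√(2 c / π)`. For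
`c = 1 - 2 s` with `s² = log (1 / δ)` this is at most `δ`, because
`1 - 2 s ≤ (1 - s²)²` and `1 - s² ≤ exp (-s²) = δ`.
-/

open MeasureTheory ProbabilityTheory

open Real

open Complex in
lemma gaussianReal_pi_map_sum_mul {ι : Type*} [Fintype ι] (m : ι → ℝ) (σ : ι → NNReal)
    (w : ι → ℝ) :
    (Measure.pi fun i => gaussianReal (m i) (σ i)).map (fun x => ∑ i, w i * x i)
      = gaussianReal (∑ i, w i * m i) (∑ i, (w i ^ 2).toNNReal * σ i) := by
  refine Measure.ext_of_charFun (funext fun t => ?_)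
  have hmeas : Measurable fun x : ι → ℝ => ∑ i, w i * x i :=
    Finset.measurable_sum _ fun i _ => by fun_prop
  rw [charFun_apply_real, integral_map hmeas.aemeasurable (by fun_prop), charFun_gaussianReal]
  simp_rw [ofReal_sum, Finset.mul_sum, Finset.sum_mul, Complex.exp_sum]
  rw [integral_fintype_prod_eq_prod (f := fun i x => cexp (t * ↑(w i * x) * I))]
  simp_rw [show ∀ (i) (x : ℝ), (t : ℂ) * ↑(w i * x) * I = ((t * w i : ℝ) : ℂ) * x * I
    from fun i x => by push_cast; ring, ← charFun_apply_real, charFun_gaussianReal,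
    ← Complex.exp_sum]
  congr 1
  simp only [NNReal.coe_sum, NNReal.coe_mul, Real.coe_toNNReal _ (sq_nonneg _), ofReal_sum,
    Finset.sum_mul, Finset.sum_div, ← Finset.sum_sub_distrib]
  refine Finset.sum_congr rfl fun i _ => ?_
  push_cast
  ring

lemma isoGaussian_map_sum_mul (d : ℕ) (v : EuclideanSpace ℝ (Fin d)) :
    (isoGaussian d).map (fun x => ∑ i, v i * x i) = gaussianReal 0 (‖v‖₊ ^ 2 / d) := by
  rw [isoGaussian, gaussianReal_pi_map_sum_mul]
  congr 1
  · simp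
  · ext
    push_cast
    simp only [Real.coe_toNNReal _ (sq_nonneg _), EuclideanSpace.real_norm_sq_eq,
      ← Finset.sum_mul, div_eq_mul_inv]

lemma gaussianPDFReal_le_inv_sqrt (μ : ℝ) (v : NNReal) (x : ℝ) :
    gaussianPDFReal μ v x ≤ (√(2 * π * v))⁻¹ :=
  mul_le_of_le_one_right (by positivity) <| exp_le_one_iff.2 <|
    div_nonpos_of_nonpos_of_nonneg (neg_nonpos.2 (sq_nonneg _)) (by positivity)

lemma gaussianReal_le_mul_volume (μ : ℝ) {v : NNReal} (hv : v ≠ 0) (s : Set ℝ) :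
    gaussianReal μ v s ≤ ENNReal.ofReal (√(2 * π * v))⁻¹ * volume s := by
  rw [gaussianReal_apply _ hv, ← setLIntegral_const]
  exact lintegral_mono fun x => ENNReal.ofReal_le_ofReal (gaussianPDFReal_le_inv_sqrt μ v x)

lemma gaussianReal_smallBall_le {v : NNReal} (hv : v ≠ 0) (c : ℝ) :
    gaussianReal 0 v {y | y ^ 2 ≤ v * c} ≤ ENNReal.ofReal √(2 * c / π) := by
  have hsub : {y : ℝ | y ^ 2 ≤ v * c} ⊆ Set.Icc (-√(v * c)) √(v * c) :=
    fun y hy => abs_le.1 (abs_le_sqrt hy)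
  have hcoef : (√(2 * π * v))⁻¹ * (√(v * c) - -√(v * c)) = √(2 * c / π) := by
    have hv' : √(v : ℝ) ≠ 0 := (sqrt_pos.2 (NNReal.coe_pos.2 (pos_iff_ne_zero.2 hv))).ne'
    rw [Real.sqrt_mul v.coe_nonneg, Real.sqrt_mul (by positivity : (0 : ℝ) ≤ 2 * π),
      show 2 * c / π = 2 ^ 2 * c / (2 * π) by field_simp,
      Real.sqrt_div' _ (by positivity : (0 : ℝ) ≤ 2 * π),
      Real.sqrt_mul (by positivity : (0 : ℝ) ≤ 2 ^ 2), Real.sqrt_sq zero_le_two]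
    field_simp
    ring
  calc gaussianReal 0 v {y | y ^ 2 ≤ v * c}
      ≤ gaussianReal 0 v (Set.Icc (-√(v * c)) √(v * c)) := measure_mono hsub
    _ ≤ ENNReal.ofReal (√(2 * π * v))⁻¹ * volume (Set.Icc (-√(v * c)) √(v * c)) :=
      gaussianReal_le_mul_volume 0 hv _
    _ = ENNReal.ofReal √(2 * c / π) := by
      rw [volume_Icc, ← ENNReal.ofReal_mul (by positivity), hcoef]

lemma sqrt_two_mul_one_sub_two_sqrt_log_inv_div_pi_le {δ : ℝ} (hδ0 : 0 < δ) (hδ1 : δ < 1) :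
    √(2 * (1 - 2 * √(log (1 / δ))) / π) ≤ δ := by
  set s := √(log (1 / δ))
  have hs0 : 0 ≤ s := sqrt_nonneg _
  have hs : s ^ 2 = log (1 / δ) := sq_sqrt (log_nonneg (by rw [le_div_iff₀ hδ0]; linarith))
  have hδ : 1 - s ^ 2 ≤ δ := by
    have hexp : exp (-s ^ 2) = δ := by
      rw [hs, exp_neg, exp_log (by positivity), one_div, inv_inv]
    linarith [add_one_le_exp (-s ^ 2)]
  rcases le_or_gt (1 - 2 * s) 0 with hc | hc
  · rw [sqrt_eq_zero'.2 (div_nonpos_of_nonpos_of_nonneg (by linarith) pi_pos.le)]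
    exact hδ0.le
  rw [sqrt_le_left hδ0.le]
  calc 2 * (1 - 2 * s) / π ≤ 1 - 2 * s := by
        rw [div_le_iff₀ pi_pos]; nlinarith [pi_gt_three]
    _ ≤ (1 - s ^ 2) ^ 2 := by nlinarith
    _ ≤ δ ^ 2 := by gcongr; nlinarith

lemma gaussianReal_sq_lowerTail_le {v : NNReal} (hv : v ≠ 0) {δ : ℝ} (hδ0 : 0 < δ)
    (hδ1 : δ < 1) :
    gaussianReal 0 v {y | y ^ 2 ≤ v * (1 - 2 * √(log (1 / δ)))} ≤ ENNReal.ofReal δ :=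
  (gaussianReal_smallBall_le hv _).trans
    (ENNReal.ofReal_le_ofReal (sqrt_two_mul_one_sub_two_sqrt_log_inv_div_pi_le hδ0 hδ1))

theorem gaussian_inner_lower_tail_general (d : ℕ)
    (v : EuclideanSpace ℝ (Fin d)) (hv : v ≠ 0)
    (δ : ℝ) (hδ0 : 0 < δ) (hδ1 : δ < 1) :
    isoGaussian d
      {x | (∑ i, v i * x i) ^ 2 ≤ (‖v‖ ^ 2 / d) * (1 - 2 * Real.sqrt (Real.log (1 / δ)))}
      ≤ ENNReal.ofReal δ := by
  have hd : d ≠ 0 := by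
    rintro rfl
    exact hv (Subsingleton.elim _ _)
  have hvar : ‖v‖₊ ^ 2 / (d : NNReal) ≠ 0 := by simp [hv, hd]
  have hmeas : Measurable fun x : Fin d → ℝ => ∑ i, v i * x i :=
    Finset.measurable_sum _ fun i _ => by fun_prop
  calc isoGaussian d
        {x | (∑ i, v i * x i) ^ 2 ≤ (‖v‖ ^ 2 / d) * (1 - 2 * Real.sqrt (Real.log (1 / δ)))}
      = gaussianReal 0 (‖v‖₊ ^ 2 / d)
          {y | y ^ 2 ≤ ((‖v‖₊ ^ 2 / d : NNReal) : ℝ) * (1 - 2 * √(log (1 / δ)))} := by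
        rw [← isoGaussian_map_sum_mul,
          Measure.map_apply hmeas (measurableSet_le (by fun_prop) (by fun_prop))]
        simp
    _ ≤ ENNReal.ofReal δ := gaussianReal_sq_lowerTail_le hvar hδ0 hδ1

/-- lower tail of `⟨v, G⟩²`: the probability that `(∑ i, v i * G i)²` is at most
`(‖v‖²/d)·(1 - 2√(ln(1/δ)))` is at most `δ`. -/
theorem gaussian_inner_lower_tail (d : ℕ) (hd : 1 ≤ d)
    (v : EuclideanSpace ℝ (Fin d)) (hv : v ≠ 0)
    (δ : ℝ) (hδ0 : 0 < δ) (hδ1 : δ < 1) :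
    isoGaussian d
      {x | (∑ i, v i * x i) ^ 2 ≤ (‖v‖ ^ 2 / d) * (1 - 2 * Real.sqrt (Real.log (1 / δ)))}
      ≤ ENNReal.ofReal δ :=
  gaussian_inner_lower_tail_general d v hv δ hδ0 hδ1
end
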